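/- arXiv:1404.3389 — 2 statements merged into one kernel-verified Lean document; each statement's English description precedes it below -/
import Mathlib

section
/- If 0 < r < 1 and x* > 0 satisfies -r*x* + tanh(x*) = 0, then f'(x*) = 1 - r - (r*x*)² < 0, i.e., the nonzero steady states ±x* are stable. -/
/-!
At a steady state `tanh x* = r x*`, so `f'(x*) = -r + (1 - tanh² x*) = 1 - r - (r x*)²`.
Stability `1 - tanh² x* < r = tanh x* / x*` is, after multiplying by `x* cosh² x*`, the
inequality `x* < sinh x* cosh x* = sinh (2 x*) / 2`, i.e. `2 x* < sinh (2 x*)`.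
-/

namespace Real

theorem one_sub_tanh_sq (x : ℝ) : 1 - tanh x ^ 2 = (cosh x ^ 2)⁻¹ := by
  have hcosh : cosh x ≠ 0 := (cosh_pos x).ne'
  rw [tanh_eq_sinh_div_cosh, div_pow]
  field_simp
  linarith [cosh_sq_sub_sinh_sq x]

theorem hasDerivAt_tanh (x : ℝ) : HasDerivAt tanh (1 - tanh x ^ 2) x := by
  have hquot := (hasDerivAt_sinh x).div (hasDerivAt_cosh x) (cosh_pos x).ne'
  have hderiv : (cosh x * cosh x - sinh x * sinh x) / cosh x ^ 2 = 1 - tanh x ^ 2 := by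
    rw [one_sub_tanh_sq, ← one_div, ← cosh_sq_sub_sinh_sq x]
    ring
  have htanh : sinh / cosh = tanh := funext fun y => (tanh_eq_sinh_div_cosh y).symm
  rwa [hderiv, htanh] at hquot

theorem mul_one_sub_tanh_sq_lt_tanh {x : ℝ} (hx : 0 < x) : x * (1 - tanh x ^ 2) < tanh x := by
  have hcosh := cosh_pos x
  have htwo : 2 * x < 2 * sinh x * cosh x := sinh_two_mul x ▸ self_lt_sinh_iff.mpr (by positivity)
  rw [one_sub_tanh_sq, tanh_eq_sinh_div_cosh, ← div_eq_mul_inv,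
    div_lt_div_iff₀ (by positivity) hcosh]
  nlinarith

end Real

theorem nonzero_steady_state_stable_general (r xs : ℝ)
    (hxs : 0 < xs) (hss : -r * xs + Real.tanh xs = 0) :
    deriv (fun x : ℝ => -r * x + Real.tanh x) xs = 1 - r - (r * xs) ^ 2 ∧
      1 - r - (r * xs) ^ 2 < 0 := by
  have htanh : Real.tanh xs = r * xs := by linarith
  have hderiv : HasDerivAt (fun x : ℝ => -r * x + Real.tanh x) (1 - r - (r * xs) ^ 2) xs := by
    have := ((hasDerivAt_id xs).const_mul (-r)).add (Real.hasDerivAt_tanh xs)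
    rw [htanh] at this
    exact this.congr_deriv (by ring)
  refine ⟨hderiv.deriv, ?_⟩
  have hlt := Real.mul_one_sub_tanh_sq_lt_tanh hxs
  rw [htanh, mul_comm r xs] at hlt
  nlinarith

theorem nonzero_steady_state_stable (r xs : ℝ) (hr0 : 0 < r) (hr1 : r < 1)
    (hxs : 0 < xs) (hss : -r * xs + Real.tanh xs = 0) :
    deriv (fun x : ℝ => -r * x + Real.tanh x) xs = 1 - r - (r * xs) ^ 2 ∧
      1 - r - (r * xs) ^ 2 < 0 :=
  nonzero_steady_state_stable_general r xs hxs hss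
end

section
/- If h₂(m(t)) ≥ δ > 0 for all t and h(x) ≤ L x for x ≥ 0 with L > 0, then the solution of x'(t) = −h(x(t)) + h₂(m(t)) with x(0) = x₀ ≥ 0 satisfies x(t) ≥ min(x₀, δ/L) for all t ≥ 0. -/
/-! If `x(t)` dipped below `min x₀ (δ / L)`, it would cross some level `b < δ / L` downwards.
But at a time where `x = b ≥ 0` the drift is `-h b + h₂(m) ≥ δ - L b > 0`, so `x` cannot cross `b`
downwards; this is the fencing theorem for differential inequalities. -/

open Set

theorem le_of_hasDerivAt_pos_of_eq {f f' : ℝ → ℝ} {a b : ℝ}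
    (hf : ∀ t, HasDerivAt f (f' t) t) (hpos : ∀ t, a ≤ t → f t = b → 0 < f' t)
    (ha : b ≤ f a) {t : ℝ} (ht : a ≤ t) : b ≤ f t := by
  have hneg : ∀ s, HasDerivAt (fun s => -f s) (-f' s) s := fun s => (hf s).neg
  have hfence := image_le_of_deriv_right_lt_deriv_boundary (B := fun _ => -b) (B' := fun _ => 0)
    (fun s _ => (hneg s).continuousAt.continuousWithinAt) (fun s _ => (hneg s).hasDerivWithinAt)
    (neg_le_neg ha) (fun _ => hasDerivAt_const _ _)
    (fun s hs hfs => neg_neg_of_pos (hpos s hs.1 (neg_inj.mp hfs)))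
    (right_mem_Icc.mpr ht)
  exact neg_le_neg_iff.mp hfence

theorem feeling_stays_high (h : ℝ → ℝ) (h2m : ℝ → ℝ) (δ L x₀ : ℝ)
    (hδ : 0 < δ) (hL : 0 < L)
    (hsoc : ∀ t : ℝ, δ ≤ h2m t)
    (hlin : ∀ x : ℝ, 0 ≤ x → h x ≤ L * x)
    (x : ℝ → ℝ)
    (hx : ∀ t : ℝ, HasDerivAt x (-h (x t) + h2m t) t)
    (hx0 : x 0 = x₀) (hx0pos : 0 ≤ x₀) :
    ∀ t : ℝ, 0 ≤ t → min x₀ (δ / L) ≤ x t := by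
  have hlevel : ∀ b, 0 ≤ b → b < δ / L → b ≤ x₀ → ∀ t, 0 ≤ t → b ≤ x t := by
    intro b hb0 hbδ hbx₀ t ht
    refine le_of_hasDerivAt_pos_of_eq hx (fun s _ hxs => ?_) (hx0 ▸ hbx₀) ht
    have hLb : L * b < δ := by rw [mul_comm]; exact (lt_div_iff₀ hL).mp hbδ
    rw [hxs]
    linarith [hlin b hb0, hsoc s]
  intro t ht
  by_contra! hlt
  obtain ⟨b, hxb, hbc⟩ := exists_between hlt
  have hb : max b 0 ≤ x t :=
    hlevel (max b 0) (le_max_right _ _)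
      (max_lt (hbc.trans_le (min_le_right _ _)) (div_pos hδ hL))
      (max_le (hbc.le.trans (min_le_left _ _)) hx0pos) t ht
  linarith [le_max_left b 0]
end
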